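/- Optimal pilot reuse factor in the asymptotic regime: the function R(ζ) = (1 − ζ·K/τ_c)·log₂(1 + ζ/μ₂), defined for 0 < ζ < τ_c/K, has a stationary point at ζ* = μ₂·(ν/W(ν·e) − 1), where ν = 1 + τ_c/(μ₂·K) and W is the Lambert W function (principal branch), i.e., R'(ζ*) = 0. -/

import Mathlib

/-!
Write `x = 1 + ζ/μ₂`. Taking logarithms in `w e^w = ν e` gives `log (ν / w) = w - 1`, and
`τc = μ₂ K (ν - 1)` gives `1 - ζ K / τc = (ν - x) / (ν - 1)`. At `ζ*` we have `x = ν / w`, so the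
two terms of `R'(ζ*)` are `∓(w - 1) / (μ₂ (ν - 1) log 2)` and cancel.
-/

open Real

theorem pos_and_log_div_eq_of_mul_exp_eq {ν w : ℝ} (hν : 0 < ν)
    (hw : w * exp w = ν * exp 1) : 0 < w ∧ log (ν / w) = w - 1 := by
  have hw₀ : 0 < w :=
    pos_of_mul_pos_left (hw ▸ mul_pos hν (exp_pos 1)) (exp_pos w).le
  refine ⟨hw₀, ?_⟩
  have hlog := congrArg log hw
  rw [log_mul hw₀.ne' (exp_ne_zero w), log_mul hν.ne' (exp_ne_zero 1), log_exp,
    log_exp] at hlog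
  rw [log_div hν.ne' hw₀.ne']
  linarith

theorem hasDerivAt_one_sub_mul_div_mul_logb_one_add_div {K τc μ ζ : ℝ} (hx : 1 + ζ / μ ≠ 0) :
    HasDerivAt (fun ζ : ℝ => (1 - ζ * K / τc) * logb 2 (1 + ζ / μ))
      (-(K / τc) * logb 2 (1 + ζ / μ) + (1 - ζ * K / τc) / (μ * log 2 * (1 + ζ / μ))) ζ := by
  have hlin : HasDerivAt (fun ζ : ℝ => 1 - ζ * K / τc) (-(K / τc)) ζ := by
    simpa using ((hasDerivAt_id ζ).mul_const K).div_const τc |>.const_sub 1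
  have harg : HasDerivAt (fun ζ : ℝ => 1 + ζ / μ) (1 / μ) ζ := by
    simpa using ((hasDerivAt_id ζ).div_const μ).const_add 1
  have hlogb : HasDerivAt (fun ζ : ℝ => logb 2 (1 + ζ / μ)) (1 / μ / (1 + ζ / μ) / log 2) ζ :=
    (harg.log hx).div_const _
  refine (hlin.mul hlogb).congr_deriv ?_
  rw [div_div, div_div, mul_right_comm μ]
  ring

theorem optimal_pilot_reuse_stationary_general (K τc μ₂ : ℝ)
    (hK : 0 < K) (hτc : 0 < τc) (hμ₂ : 0 < μ₂)
    (ν : ℝ) (hν : ν = 1 + τc / (μ₂ * K))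
    (w : ℝ) (hw : w * Real.exp w = ν * Real.exp 1)
    (ζstar : ℝ) (hζstar : ζstar = μ₂ * (ν / w - 1)) :
    HasDerivAt (fun ζ : ℝ => (1 - ζ * K / τc) * Real.logb 2 (1 + ζ / μ₂))
      0 ζstar := by
  have hν₁ : 1 < ν := by
    rw [hν]
    linarith [div_pos hτc (mul_pos hμ₂ hK)]
  obtain ⟨hw₀, hlog⟩ := pos_and_log_div_eq_of_mul_exp_eq (by linarith) hw
  have hx : 1 + ζstar / μ₂ = ν / w := by
    rw [hζstar]
    field_simp
    ring
  have hτ : τc = μ₂ * K * (ν - 1) := by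
    rw [hν]
    field_simp
    ring
  refine (hasDerivAt_one_sub_mul_div_mul_logb_one_add_div (K := K) (τc := τc)
    (hx ▸ (div_pos (by linarith) hw₀).ne')).congr_deriv ?_
  rw [← log_div_log, hx, hlog, hζstar, hτ]
  have hlog₂ : log 2 ≠ 0 := (log_pos one_lt_two).ne'
  have ha : ν - 1 ≠ 0 := by linarith
  field_simp
  ring

/-- Optimal pilot reuse factor in the asymptotic regime: the asymptotic rate
`R(ζ) = (1 - ζK/τ_c) · log₂(1 + ζ/μ₂)` has a stationary point at
`ζ* = μ₂·(ν/W(νe) - 1)`, where `ν = 1 + τ_c/(μ₂K)` and `W(νe)` is the value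
`w` of the principal branch of the Lambert W function at `ν·e`, i.e.
characterized by `w·e^w = ν·e` and `w ≥ -1`. -/
theorem optimal_pilot_reuse_stationary (K τc μ₂ : ℝ)
    (hK : 0 < K) (hτc : 0 < τc) (hμ₂ : 0 < μ₂)
    (ν : ℝ) (hν : ν = 1 + τc / (μ₂ * K))
    (w : ℝ) (hw : w * Real.exp w = ν * Real.exp 1) (hw1 : -1 ≤ w)
    (ζstar : ℝ) (hζstar : ζstar = μ₂ * (ν / w - 1)) :
    HasDerivAt (fun ζ : ℝ => (1 - ζ * K / τc) * Real.logb 2 (1 + ζ / μ₂))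
      0 ζstar :=
  optimal_pilot_reuse_stationary_general K τc μ₂ hK hτc hμ₂ ν hν w hw ζstar hζstar
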